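/- arXiv:0902.4834 — 8 statements merged into one kernel-verified Lean document; each statement's English description precedes it below -/
import Mathlib

section
/- For the parabolic arc with control point (p,q), q ≠ 0, the derivative of the curvature satisfies k'(t) = (192q/g(t)⁵)·[(p²+q²)(2t-1) - p], where g(t) = √(x'(t)² + y'(t)²). -/
private lemma quad_deriv (a b c : ℝ) :
    deriv (fun t : ℝ => a + b*t + c*t^2) = fun t => b + 2*c*t := by
  funext s
  have h : HasDerivAt (fun t : ℝ => a + b*t + c*t^2) (b + 2*c*s) s := by
    have h1 := ((hasDerivAt_const s a).add ((hasDerivAt_id s).const_mul b)).add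
      ((hasDerivAt_pow 2 s).const_mul c)
    refine h1.congr_deriv ?_
    push_cast; ring
  exact h.deriv

private lemma lin_deriv (b c : ℝ) :
    deriv (fun t : ℝ => b + 2*c*t) = fun _ => 2*c := by
  funext s
  have h : HasDerivAt (fun t : ℝ => b + 2*c*t) (2*c) s := by
    simpa using ((hasDerivAt_id s).const_mul (2*c)).const_add b
  exact h.deriv

/-- Derivative of the curvature of the parabolic Bézier arc:
`k'(t) = (192q/g(t)⁵)·[(p²+q²)(2t-1) - p]`. -/
theorem parabola_curvature_deriv (p q : ℝ) (hq : q ≠ 0) :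
    let x : ℝ → ℝ := fun t => -(1 - t)^2 + 2*p*(1 - t)*t + t^2
    let y : ℝ → ℝ := fun t => 2*q*t*(1 - t)
    let g : ℝ → ℝ := fun t => Real.sqrt ((deriv x t)^2 + (deriv y t)^2)
    let k : ℝ → ℝ := fun t =>
      (deriv (deriv y) t * deriv x t - deriv (deriv x) t * deriv y t)
        / ((deriv x t)^2 + (deriv y t)^2) ^ ((3 : ℝ)/2)
    ∀ t, deriv k t = 192*q / (g t)^5 * ((p^2 + q^2)*(2*t - 1) - p) := by
  intro x y g k t
  have hxe : x = fun t : ℝ => (-1) + (2+2*p)*t + (-(2*p))*t^2 := by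
    funext s; simp only [x]; ring
  have hye : y = fun t : ℝ => 0 + (2*q)*t + (-(2*q))*t^2 := by
    funext s; simp only [y]; ring
  have hx : deriv x = fun t : ℝ => (2+2*p) + 2*(-(2*p))*t := by
    rw [hxe, quad_deriv]
  have hy : deriv y = fun t : ℝ => (2*q) + 2*(-(2*q))*t := by
    rw [hye, quad_deriv]
  have hddx : deriv (deriv x) = fun _ : ℝ => 2*(-(2*p)) := by
    rw [hx, lin_deriv]
  have hddy : deriv (deriv y) = fun _ : ℝ => 2*(-(2*q)) := by
    rw [hy, lin_deriv]
  have hk : k = fun s : ℝ => (-8*q) /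
      ((((2+2*p) + 2*(-(2*p))*s)^2 + ((2*q) + 2*(-(2*q))*s)^2) ^ ((3:ℝ)/2)) := by
    funext s
    simp only [k]
    rw [hddx, hddy, hx, hy]
    simp only []
    congr 1
    ring
  set At : ℝ := (2+2*p) + 2*(-(2*p))*t with hAt
  set Bt : ℝ := (2*q) + 2*(-(2*q))*t with hBt
  have hpos : 0 < At^2 + Bt^2 := by
    rcases eq_or_ne Bt 0 with hB | hB
    · have h1 : (2*q) * (1 - 2*t) = 0 := by rw [hBt] at hB; linarith [hB]
      have h2 : (1 : ℝ) - 2*t = 0 := by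
        rcases mul_eq_zero.mp h1 with h | h
        · exact absurd h (by simpa using hq)
        · exact h
      have hA2 : At = 2 := by rw [hAt]; linear_combination (2*p) * h2
      rw [hA2, hB]; norm_num
    · have : 0 < Bt^2 := lt_of_le_of_ne (sq_nonneg _) (Ne.symm (pow_ne_zero 2 hB))
      nlinarith [sq_nonneg At]
  have hA : HasDerivAt (fun s : ℝ => (2+2*p) + 2*(-(2*p))*s) (2*(-(2*p))) t := by
    simpa using ((hasDerivAt_id t).const_mul (2*(-(2*p)))).const_add (2+2*p)
  have hB : HasDerivAt (fun s : ℝ => (2*q) + 2*(-(2*q))*s) (2*(-(2*q))) t := by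
    simpa using ((hasDerivAt_id t).const_mul (2*(-(2*q)))).const_add (2*q)
  have hU := (hA.pow 2).add (hB.pow 2)
  have hV := hU.rpow_const (p := (3:ℝ)/2) (Or.inl hpos.ne')
  have hVne : ((At^2 + Bt^2) ^ ((3:ℝ)/2)) ≠ 0 := (Real.rpow_pos_of_pos hpos _).ne'
  have hK := (hasDerivAt_const t (-8*q)).div hV hVne
  rw [hk]; erw [hK.deriv]; simp only [Pi.add_apply, Pi.pow_apply]; rw [← hAt, ← hBt]
  have hg : g t = Real.sqrt (At^2 + Bt^2) := by
    rw [hAt, hBt]; simp only [g, hx, hy]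
  set s0 : ℝ := Real.sqrt (At^2 + Bt^2) with hs0def
  have hs0 : 0 < s0 := Real.sqrt_pos.mpr hpos
  have hsq : s0^2 = At^2 + Bt^2 := Real.sq_sqrt hpos.le
  have e2 : (At^2 + Bt^2) ^ ((1:ℝ)/2) = s0 := by rw [hs0def, Real.sqrt_eq_rpow]
  have e1 : (At^2 + Bt^2) ^ ((3:ℝ)/2) = s0^3 := by
    rw [show (3:ℝ)/2 = 1 + 1/2 by norm_num, Real.rpow_add hpos, Real.rpow_one, e2, ← hsq]
    ring
  have e3 : (At^2 + Bt^2) ^ ((3:ℝ)/2 - 1) = s0 := by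
    rw [show (3:ℝ)/2 - 1 = 1/2 by norm_num]; exact e2
  rw [hg, e1, e3]
  field_simp
  ring
end

section
/- The parabolic arc x(t) = -(1-t)² + 2p(1-t)t + t², y(t) = 2qt(1-t), t ∈ [0,1], with q ≠ 0, has monotone curvature on [0,1] if and only if (p² + p + q²)(p² - p + q²) ≤ 0. -/
private lemma key_le {c u v : ℝ} (hu : 0 < u) (h : u ≤ v) (hc : c ≤ 0) :
    c / u ^ ((3:ℝ)/2) ≤ c / v ^ ((3:ℝ)/2) := by
  have hv : 0 < v := lt_of_lt_of_le hu h
  have h1 : u ^ ((3:ℝ)/2) ≤ v ^ ((3:ℝ)/2) := Real.rpow_le_rpow hu.le h (by norm_num)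
  have h2 : 0 < u ^ ((3:ℝ)/2) := Real.rpow_pos_of_pos hu _
  have h3 : 0 < v ^ ((3:ℝ)/2) := Real.rpow_pos_of_pos hv _
  rw [div_le_div_iff₀ h2 h3]
  nlinarith

private lemma key_ge {c u v : ℝ} (hu : 0 < u) (h : u ≤ v) (hc : 0 ≤ c) :
    c / v ^ ((3:ℝ)/2) ≤ c / u ^ ((3:ℝ)/2) := by
  have := key_le (c := -c) hu h (by linarith)
  rw [neg_div, neg_div] at this
  linarith

private lemma key_lt {c u v : ℝ} (hu : 0 < u) (h : u < v) (hc : c < 0) :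
    c / u ^ ((3:ℝ)/2) < c / v ^ ((3:ℝ)/2) := by
  have hv : 0 < v := lt_trans hu h
  have h1 : u ^ ((3:ℝ)/2) < v ^ ((3:ℝ)/2) := Real.rpow_lt_rpow hu.le h (by norm_num)
  have h2 : 0 < u ^ ((3:ℝ)/2) := Real.rpow_pos_of_pos hu _
  have h3 : 0 < v ^ ((3:ℝ)/2) := Real.rpow_pos_of_pos hv _
  rw [div_lt_div_iff₀ h2 h3]
  nlinarith

private lemma key_gt {c u v : ℝ} (hu : 0 < u) (h : u < v) (hc : 0 < c) :
    c / v ^ ((3:ℝ)/2) < c / u ^ ((3:ℝ)/2) := by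
  have := key_lt (c := -c) hu h (by linarith)
  rw [neg_div, neg_div] at this
  linarith

/-- The parabolic Bézier arc from `(-1,0)` to `(1,0)` with control point
`(p,q)`, `q ≠ 0`, has monotone curvature on `[0,1]` if and only if
`(p² + p + q²)(p² - p + q²) ≤ 0`. -/
theorem parabola_spiral_criterion (p q : ℝ) (hq : q ≠ 0) :
    let x : ℝ → ℝ := fun t => -(1 - t)^2 + 2*p*(1 - t)*t + t^2
    let y : ℝ → ℝ := fun t => 2*q*t*(1 - t)
    let k : ℝ → ℝ := fun t =>
      (deriv (deriv y) t * deriv x t - deriv (deriv x) t * deriv y t)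
        / ((deriv x t)^2 + (deriv y t)^2) ^ ((3 : ℝ)/2)
    (MonotoneOn k (Set.Icc 0 1) ∨ AntitoneOn k (Set.Icc 0 1)) ↔
      (p^2 + p + q^2) * (p^2 - p + q^2) ≤ 0 := by
  intro x y k
  -- first derivatives
  have hx' : deriv x = fun t => 2 + 2*p - 4*p*t := by
    funext t
    have h1 : HasDerivAt (fun s : ℝ => -2*p*s^2 + (2+2*p)*s - 1) (-2*p*(2*t) + (2+2*p)) t := by
      have := (((hasDerivAt_pow 2 t).const_mul (-2*p)).add
        ((hasDerivAt_id t).const_mul (2+2*p))).sub_const 1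
      simpa using this
    have he : (fun s : ℝ => -2*p*s^2 + (2+2*p)*s - 1) = x := by
      funext s; show _ = -(1 - s)^2 + 2*p*(1 - s)*s + s^2; ring
    rw [he] at h1
    have h2 : HasDerivAt x (2 + 2*p - 4*p*t) t := by convert h1 using 1; ring
    exact h2.deriv
  have hy' : deriv y = fun t => 2*q - 4*q*t := by
    funext t
    have h1 : HasDerivAt (fun s : ℝ => -2*q*s^2 + (2*q)*s - 0) (-2*q*(2*t) + (2*q)) t := by
      have := (((hasDerivAt_pow 2 t).const_mul (-2*q)).add
        ((hasDerivAt_id t).const_mul (2*q))).sub_const 0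
      simpa using this
    have he : (fun s : ℝ => -2*q*s^2 + (2*q)*s - 0) = y := by
      funext s; show _ = 2*q*s*(1 - s); ring
    rw [he] at h1
    have h2 : HasDerivAt y (2*q - 4*q*t) t := by convert h1 using 1; ring
    exact h2.deriv
  -- second derivatives
  have hx'' : deriv (deriv x) = fun _ : ℝ => -(4*p) := by
    rw [hx']; funext t
    have h1 : HasDerivAt (fun s : ℝ => 2 + 2*p - 4*p*s) (-(4*p)) t := by
      have := ((hasDerivAt_id t).const_mul (4*p)).const_sub (2 + 2*p)
      simpa using this
    exact h1.deriv
  have hy'' : deriv (deriv y) = fun _ : ℝ => -(4*q) := by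
    rw [hy']; funext t
    have h1 : HasDerivAt (fun s : ℝ => 2*q - 4*q*s) (-(4*q)) t := by
      have := ((hasDerivAt_id t).const_mul (4*q)).const_sub (2*q)
      simpa using this
    exact h1.deriv
  set D : ℝ → ℝ := fun t => (2 + 2*p - 4*p*t)^2 + (2*q - 4*q*t)^2 with hDdef
  have hDpos : ∀ t, 0 < D t := by
    intro t
    rcases eq_or_ne t (1/2) with h | h
    · have h4 : D t = 4 := by simp only [hDdef, h]; ring
      rw [h4]; norm_num
    · have : (2*q - 4*q*t) ≠ 0 := by
        intro hc
        apply h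
        have : q * (2 - 4*t) = 0 := by linarith [hc]
        rcases mul_eq_zero.1 this with h' | h'
        · exact absurd h' hq
        · linarith
      have h2 : 0 < (2*q - 4*q*t)^2 := by positivity
      have h3 : 0 ≤ (2 + 2*p - 4*p*t)^2 := sq_nonneg _
      simp only [hDdef]; linarith
  have hk : ∀ t, k t = (-(8*q)) / (D t) ^ ((3:ℝ)/2) := by
    intro t
    show (deriv (deriv y) t * deriv x t - deriv (deriv x) t * deriv y t)
        / ((deriv x t)^2 + (deriv y t)^2) ^ ((3 : ℝ)/2) = _
    rw [hx'', hy'', hx', hy']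
    simp only [hDdef]
    congr 1
    ring
  set A := p^2 + p + q^2 with hA
  set B := p^2 - p + q^2 with hB
  have hDdiff : ∀ s t : ℝ, D t - D s = (t - s) * (16*(p^2+q^2)*(t+s) - 16*A) := by
    intro s t; simp only [hDdef, hA]; ring
  have hq2 : 0 < q^2 := by positivity
  constructor
  · -- monotone → product ≤ 0, by contraposition
    intro hmono
    by_contra hAB
    push_neg at hAB
    have hsum : A + B = 2*(p^2 + q^2) := by simp only [hA, hB]; ring
    have hA0 : 0 < A := by
      by_contra h
      push_neg at h
      have hB0 : 0 < B := by nlinarith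
      nlinarith
    have hB0 : 0 < B := by nlinarith
    have hP : 0 < p^2 + q^2 := by nlinarith
    set τ := A / (2*(p^2+q^2)) with hτ
    have hτ0 : 0 < τ := div_pos hA0 (by linarith)
    have hτ1 : τ < 1 := by
      rw [hτ, div_lt_one (by linarith)]
      nlinarith
    have hPτ : 16*(p^2+q^2)*τ = 8*A := by
      rw [hτ]; field_simp; ring
    have hD0 : D τ < D 0 := by
      have := hDdiff 0 τ
      nlinarith
    have hD1 : D τ < D 1 := by
      have := hDdiff 1 τ
      nlinarith
    have hmem0 : (0:ℝ) ∈ Set.Icc (0:ℝ) 1 := by norm_num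
    have hmem1 : (1:ℝ) ∈ Set.Icc (0:ℝ) 1 := by norm_num
    have hmemτ : τ ∈ Set.Icc (0:ℝ) 1 := ⟨hτ0.le, hτ1.le⟩
    rcases lt_or_gt_of_ne hq with hqneg | hqpos
    · -- q < 0, c = -8q > 0
      have hc : (0:ℝ) < -(8*q) := by linarith
      have h1 : k τ > k 0 := by rw [hk, hk]; exact key_gt (hDpos τ) hD0 hc
      have h2 : k τ > k 1 := by rw [hk, hk]; exact key_gt (hDpos τ) hD1 hc
      rcases hmono with hm | ha
      · have := hm hmemτ hmem1 hτ1.le; linarith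
      · have := ha hmem0 hmemτ hτ0.le; linarith
    · -- q > 0, c = -8q < 0
      have hc : -(8*q) < 0 := by linarith
      have h1 : k τ < k 0 := by rw [hk, hk]; exact key_lt (hDpos τ) hD0 hc
      have h2 : k τ < k 1 := by rw [hk, hk]; exact key_lt (hDpos τ) hD1 hc
      rcases hmono with hm | ha
      · have := hm hmem0 hmemτ hτ0.le; linarith
      · have := ha hmemτ hmem1 hτ1.le; linarith
  · -- product ≤ 0 → monotone
    intro hAB
    by_cases hA0 : A ≤ 0
    · -- D nondecreasing on [0,1]
      have hDmono : ∀ s ∈ Set.Icc (0:ℝ) 1, ∀ t ∈ Set.Icc (0:ℝ) 1, s ≤ t → D s ≤ D t := by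
        intro s hs t ht hst
        have := hDdiff s t
        have h1 : 0 ≤ s := hs.1
        have h2 : 0 ≤ t := ht.1
        have hP : (0:ℝ) ≤ 16*(p^2+q^2) := by positivity
        have hterm : 0 ≤ (t - s) * (16*(p^2+q^2)*(t+s) - 16*A) := by
          apply mul_nonneg (by linarith)
          have h5 : 0 ≤ 16*(p^2+q^2)*(t+s) := mul_nonneg hP (by linarith)
          linarith
        linarith
      rcases lt_or_gt_of_ne hq with hqneg | hqpos
      · right
        intro s hs t ht hst
        rw [hk, hk]
        exact key_ge (hDpos s) (hDmono s hs t ht hst) (by linarith)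
      · left
        intro s hs t ht hst
        rw [hk, hk]
        exact key_le (hDpos s) (hDmono s hs t ht hst) (by linarith)
    · -- then B ≤ 0, D nonincreasing on [0,1]
      push_neg at hA0
      have hB0 : B ≤ 0 := by nlinarith
      have hDanti : ∀ s ∈ Set.Icc (0:ℝ) 1, ∀ t ∈ Set.Icc (0:ℝ) 1, s ≤ t → D t ≤ D s := by
        intro s hs t ht hst
        have := hDdiff s t
        have h1 : s ≤ 1 := hs.2
        have h2 : t ≤ 1 := ht.2
        have hsumAB : A + B = 2*(p^2 + q^2) := by simp only [hA, hB]; ring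
        have hP : (0:ℝ) ≤ 16*(p^2+q^2) := by positivity
        have h5 : 16*(p^2+q^2)*(t+s) ≤ 16*(p^2+q^2)*2 := by nlinarith
        have hterm : (t - s) * (16*(p^2+q^2)*(t+s) - 16*A) ≤ 0 :=
          mul_nonpos_of_nonneg_of_nonpos (by linarith) (by linarith)
        linarith
      rcases lt_or_gt_of_ne hq with hqneg | hqpos
      · left
        intro s hs t ht hst
        rw [hk, hk]
        exact key_ge (hDpos t) (hDanti s hs t ht hst) (by linarith)
      · right
        intro s hs t ht hst
        rw [hk, hk]
        exact key_le (hDpos t) (hDanti s hs t ht hst) (by linarith)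
end

section
/- For the parabolic arc with control point (p,q), q ≠ 0, the invariant Q = (a + sin α)(b - sin β) + sin²((α+β)/2), where a = -q/h₁³, b = -q/h₂³ are the boundary curvatures and α, β the boundary angles, equals 1/2 + (p² + q² - 1)/(2h₁h₂) - q²(2p² + 2q² + 1)/(h₁³h₂³). -/
/-- The invariant `Q = (a + sin α)(b - sin β) + sin²((α+β)/2)` of the
parabolic Bézier arc with control point `(p,q)`, `q ≠ 0`, expressed through
the control point. -/
theorem parabola_invariant_Q (p q : ℝ) (hq : q ≠ 0) :
    let h₁ : ℝ := Real.sqrt ((1 + p)^2 + q^2)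
    let h₂ : ℝ := Real.sqrt ((1 - p)^2 + q^2)
    let α : ℝ := Complex.arg ((2*(1 + p) : ℝ) + (2*q : ℝ) * Complex.I)
    let β : ℝ := Complex.arg ((2*(1 - p) : ℝ) + (-(2*q) : ℝ) * Complex.I)
    let a : ℝ := -q / h₁^3
    let b : ℝ := -q / h₂^3
    (a + Real.sin α) * (b - Real.sin β) + Real.sin ((α + β)/2)^2
      = 1/2 + (p^2 + q^2 - 1)/(2*h₁*h₂) - q^2*(2*p^2 + 2*q^2 + 1)/(h₁^3*h₂^3) := by
  intro h₁ h₂ α β a b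
  have hA : (0:ℝ) < (1 + p)^2 + q^2 := by positivity
  have hB : (0:ℝ) < (1 - p)^2 + q^2 := by positivity
  have h1pos : 0 < h₁ := Real.sqrt_pos.mpr hA
  have h2pos : 0 < h₂ := Real.sqrt_pos.mpr hB
  have e1 : h₁^2 = (1 + p)^2 + q^2 := Real.sq_sqrt hA.le
  have e2 : h₂^2 = (1 - p)^2 + q^2 := Real.sq_sqrt hB.le
  have habs1 : ‖((2*(1 + p) : ℝ) + (2*q : ℝ) * Complex.I)‖ = 2 * h₁ := by
    rw [Complex.norm_add_mul_I]
    have : (2*(1+p))^2 + (2*q)^2 = 2^2 * ((1+p)^2 + q^2) := by ring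
    rw [this, Real.sqrt_mul (by positivity), Real.sqrt_sq (by norm_num : (0:ℝ) ≤ 2)]
  have habs2 : ‖((2*(1 - p) : ℝ) + (-(2*q) : ℝ) * Complex.I)‖ = 2 * h₂ := by
    rw [Complex.norm_add_mul_I]
    have : (2*(1-p))^2 + (-(2*q))^2 = 2^2 * ((1-p)^2 + q^2) := by ring
    rw [this, Real.sqrt_mul (by positivity), Real.sqrt_sq (by norm_num : (0:ℝ) ≤ 2)]
  have hz1 : ((2*(1 + p) : ℝ) + (2*q : ℝ) * Complex.I) ≠ 0 := by
    intro h
    have := congrArg Complex.im h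
    simp at this
    exact hq this
  have hz2 : ((2*(1 - p) : ℝ) + (-(2*q) : ℝ) * Complex.I) ≠ 0 := by
    intro h
    have := congrArg Complex.im h
    simp at this
    exact hq this
  have hsinα : Real.sin α = q / h₁ := by
    show Real.sin (Complex.arg _) = _
    rw [Complex.sin_arg, habs1]
    simp
    field_simp
  have hcosα : Real.cos α = (1 + p) / h₁ := by
    show Real.cos (Complex.arg _) = _
    rw [Complex.cos_arg hz1, habs1]
    simp
    field_simp
  have hsinβ : Real.sin β = -q / h₂ := by
    show Real.sin (Complex.arg _) = _
    rw [Complex.sin_arg, habs2]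
    simp
    field_simp
  have hcosβ : Real.cos β = (1 - p) / h₂ := by
    show Real.cos (Complex.arg _) = _
    rw [Complex.cos_arg hz2, habs2]
    simp
    field_simp
  have hhalf : Real.sin ((α + β)/2)^2 = (1 - Real.cos (α + β))/2 := by
    have h1 := Real.cos_two_mul ((α + β)/2)
    have h2 := Real.sin_sq_add_cos_sq ((α + β)/2)
    have h3 : 2 * ((α + β)/2) = α + β := by ring
    rw [h3] at h1
    linarith
  rw [hhalf, Real.cos_add, hsinα, hcosα, hsinβ, hcosβ]
  show (-q / h₁^3 + q / h₁) * (-q / h₂^3 - (-q / h₂)) + _ = _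
  have h1ne := h1pos.ne'
  have h2ne := h2pos.ne'
  field_simp
  ring_nf
  linear_combination ((8:ℝ)*q^2*h₂^6 + (-8:ℝ)*q^2*h₂^8 + (4:ℝ)*q^2*h₁^1*h₂^1 + (-2:ℝ)*q^2*h₁^1*h₂^3 + (8:ℝ)*q^2*h₁^2*h₂^6 + (-8:ℝ)*q^2*h₁^2*h₂^8 + (8:ℝ)*q^2*h₁^4*h₂^6 + (-8:ℝ)*q^2*h₁^4*h₂^8 + (-8:ℝ)*q^2*h₁^6*h₂^6 + (24:ℝ)*q^4*h₂^6 + (-16:ℝ)*q^4*h₂^8 + (16:ℝ)*q^4*h₁^2*h₂^6 + (-8:ℝ)*q^4*h₁^2*h₂^8 + (8:ℝ)*q^4*h₁^4*h₂^6 + (24:ℝ)*q^6*h₂^6 + (-8:ℝ)*q^6*h₂^8 + (8:ℝ)*q^6*h₁^2*h₂^6 + (8:ℝ)*q^8*h₂^6 + (16:ℝ)*p^1*q^2*h₂^6 + (-32:ℝ)*p^1*q^2*h₂^8 + (-16:ℝ)*p^1*q^2*h₁^2*h₂^8 + (-16:ℝ)*p^1*q^2*h₁^4*h₂^6 + (32:ℝ)*p^1*q^4*h₂^6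 + (-32:ℝ)*p^1*q^4*h₂^8 + (16:ℝ)*p^1*q^6*h₂^6 + (-8:ℝ)*p^2*q^2*h₂^6 + (-48:ℝ)*p^2*q^2*h₂^8 + (-16:ℝ)*p^2*q^2*h₁^2*h₂^6 + (-8:ℝ)*p^2*q^2*h₁^2*h₂^8 + (8:ℝ)*p^2*q^2*h₁^4*h₂^6 + (16:ℝ)*p^2*q^4*h₂^6 + (-16:ℝ)*p^2*q^4*h₂^8 + (16:ℝ)*p^2*q^4*h₁^2*h₂^6 + (24:ℝ)*p^2*q^6*h₂^6 + (-32:ℝ)*p^3*q^2*h₂^6 + (-32:ℝ)*p^3*q^2*h₂^8 + (32:ℝ)*p^3*q^4*h₂^6 + (-8:ℝ)*p^4*q^2*h₂^6 + (-8:ℝ)*p^4*q^2*h₂^8 + (8:ℝ)*p^4*q^2*h₁^2*h₂^6 + (24:ℝ)*p^4*q^4*h₂^6 + (16:ℝ)*p^5*q^2*h₂^6 + (8:ℝ)*p^6*q^2*h₂^6) * e1 + ((-8:ℝ)*q^2*h₂^6 + (2:ℝ)*q^2*h₁^1*h₂^1 + (-24:ℝ)*q^4*h₂^6 + (-2:ℝ)*q^4*h₁^1*h₂^1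 + (-24:ℝ)*q^6*h₂^6 + (-8:ℝ)*q^8*h₂^6 + (-48:ℝ)*p^1*q^2*h₂^6 + (-4:ℝ)*p^1*q^2*h₁^1*h₂^1 + (-96:ℝ)*p^1*q^4*h₂^6 + (-48:ℝ)*p^1*q^6*h₂^6 + (-120:ℝ)*p^2*q^2*h₂^6 + (-2:ℝ)*p^2*q^2*h₁^1*h₂^1 + (-144:ℝ)*p^2*q^4*h₂^6 + (-24:ℝ)*p^2*q^6*h₂^6 + (-160:ℝ)*p^3*q^2*h₂^6 + (-96:ℝ)*p^3*q^4*h₂^6 + (-120:ℝ)*p^4*q^2*h₂^6 + (-24:ℝ)*p^4*q^4*h₂^6 + (-48:ℝ)*p^5*q^2*h₂^6 + (-8:ℝ)*p^6*q^2*h₂^6) * e2 + ((-2:ℝ)*q^2 + 8*q^2*h₁^6*h₂^6) * (e1 + e2) + (2*q^2*h₁*h₂*(h₂^2-2)) * e1 + (2*q^2*h₁*h₂*(((1+p)^2+q^2)-2)) * e2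
end

section
/- Given σ with sin σ ≠ 0, the set of points (x,y) with sign(xy) = -sign(sin σ) satisfying sin σ·(1 - x² + y²) + 2xy·cos σ = 0 is exactly the set of control points (p,q) of parabolic arcs from (-1,0) to (1,0) whose boundary angle sum α + β equals σ (mod 2π), i.e. whose (cos(α+β), sin(α+β)) = (cos σ, sin σ). -/
private lemma aux_eq_of_sq_eq {r t : ℝ} (hr : 0 ≤ r) (ht : 0 < t)
    (h : r^2 = t^2) : r = t := by
  nlinarith [sq_nonneg (r - t), sq_nonneg (r + t)]

open Real in
/-- For a fixed `σ` with `sin σ ≠ 0`, the branch of the hyperbola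
`sin σ·(1 - x² + y²) + 2xy·cos σ = 0` with `sign(xy) = -sign(sin σ)` is exactly
the set of control points `(p,q)` of parabolic arcs from `(-1,0)` to `(1,0)`
whose boundary angle sum equals `σ` modulo `2π`. -/
theorem hyperbola_locus_of_angle_sum (σ : ℝ) (hσ : Real.sin σ ≠ 0) :
    {xy : ℝ × ℝ | Real.sign (xy.1 * xy.2) = -Real.sign (Real.sin σ) ∧
        Real.sin σ * (1 - xy.1^2 + xy.2^2) + 2*xy.1*xy.2*Real.cos σ = 0}
      = {pq : ℝ × ℝ | pq.2 ≠ 0 ∧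
          Real.cos (Complex.arg ((2*(1 + pq.1) : ℝ) + (2*pq.2 : ℝ) * Complex.I)
              + Complex.arg ((2*(1 - pq.1) : ℝ) + (-(2*pq.2) : ℝ) * Complex.I))
            = Real.cos σ ∧
          Real.sin (Complex.arg ((2*(1 + pq.1) : ℝ) + (2*pq.2 : ℝ) * Complex.I)
              + Complex.arg ((2*(1 - pq.1) : ℝ) + (-(2*pq.2) : ℝ) * Complex.I))
            = Real.sin σ} := by
  have key : ∀ z w : ℂ, z ≠ 0 → w ≠ 0 →
      Real.cos (z.arg + w.arg) = (z*w).re / (‖z‖ * ‖w‖) ∧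
      Real.sin (z.arg + w.arg) = (z*w).im / (‖z‖ * ‖w‖) := by
    intro z w hz hw
    have haz : ‖z‖ ≠ 0 := norm_ne_zero_iff.mpr hz
    have haw : ‖w‖ ≠ 0 := norm_ne_zero_iff.mpr hw
    constructor
    · rw [Real.cos_add, Complex.cos_arg hz, Complex.cos_arg hw,
        Complex.sin_arg, Complex.sin_arg, Complex.mul_re]
      field_simp
    · rw [Real.sin_add, Complex.cos_arg hz, Complex.cos_arg hw,
        Complex.sin_arg, Complex.sin_arg, Complex.mul_im]
      field_simp; ring
  ext ⟨p, q⟩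
  simp only [Set.mem_setOf_eq]
  set z₁ : ℂ := ((2*(1 + p) : ℝ) : ℂ) + ((2*q : ℝ) : ℂ) * Complex.I with hz₁
  set z₂ : ℂ := ((2*(1 - p) : ℝ) : ℂ) + ((-(2*q) : ℝ) : ℂ) * Complex.I with hz₂
  have hre1 : z₁.re = 2*(1+p) := by simp [hz₁]
  have him1 : z₁.im = 2*q := by simp [hz₁]
  have hre2 : z₂.re = 2*(1-p) := by simp [hz₂]
  have him2 : z₂.im = -(2*q) := by simp [hz₂]
  obtain ⟨A, hA⟩ : ∃ A : ℝ, A = 4*(1 - p^2 + q^2) := ⟨_, rfl⟩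
  obtain ⟨B, hB⟩ : ∃ B : ℝ, B = -8*(p*q) := ⟨_, rfl⟩
  have hmre : (z₁*z₂).re = A := by
    rw [Complex.mul_re, hre1, him1, hre2, him2, hA]; ring
  have hmim : (z₁*z₂).im = B := by
    rw [Complex.mul_im, hre1, him1, hre2, him2, hB]; ring
  constructor
  · rintro ⟨hsign, heq⟩
    have hpq : p * q ≠ 0 := by
      intro h
      rw [h, Real.sign_zero] at hsign
      exact hσ (Real.sign_eq_zero_iff.mp (by linarith [hsign] : Real.sign (Real.sin σ) = 0))
    have hq : q ≠ 0 := fun h => hpq (by rw [h, mul_zero])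
    have hz1 : z₁ ≠ 0 := fun h => hq (by have := congrArg Complex.im h; rw [him1] at this; simpa using this)
    have hz2 : z₂ ≠ 0 := fun h => hq (by have := congrArg Complex.im h; rw [him2] at this; simpa using this)
    -- B and sin σ have the same (nonzero) sign
    have hBs : 0 < B * Real.sin σ := by
      rcases lt_or_gt_of_ne hσ with hs | hs
      · rw [Real.sign_of_neg hs] at hsign
        have hpq' : 0 < p * q := by
          rcases lt_trichotomy (p*q) 0 with h | h | h
          · rw [Real.sign_of_neg h] at hsign; norm_num at hsign
          · exact absurd h hpq
          · exact h
        have : B < 0 := by rw [hB]; nlinarith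
        nlinarith
      · rw [Real.sign_of_pos hs] at hsign
        have hpq' : p * q < 0 := by
          rcases lt_trichotomy (p*q) 0 with h | h | h
          · exact h
          · exact absurd h hpq
          · rw [Real.sign_of_pos h] at hsign; norm_num at hsign
        have : 0 < B := by rw [hB]; nlinarith
        nlinarith
    obtain ⟨t, ht⟩ : ∃ t : ℝ, t = B / Real.sin σ := ⟨_, rfl⟩
    have htpos : 0 < t := by
      rcases lt_or_gt_of_ne hσ with hs | hs
      · have hBneg : B < 0 := by nlinarith
        rw [ht]; exact div_pos_of_neg_of_neg hBneg hs
      · have hBpos : 0 < B := by nlinarith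
        rw [ht]; exact div_pos hBpos hs
    have hBt : B = t * Real.sin σ := by rw [ht]; field_simp
    have hAt : A = t * Real.cos σ := by
      have hAB : A * Real.sin σ = B * Real.cos σ := by rw [hA, hB]; nlinarith [heq]
      have h2 : A * Real.sin σ = (t * Real.cos σ) * Real.sin σ := by
        rw [hAB, hBt]; ring
      exact mul_right_cancel₀ hσ h2
    obtain ⟨r, hr⟩ : ∃ r : ℝ, r = ‖z₁‖ * ‖z₂‖ := ⟨_, rfl⟩
    have hrt : r = t := by
      have h1 : r^2 = A^2 + B^2 := by
        rw [hr, ← norm_mul, Complex.sq_norm, Complex.normSq_apply, hmre, hmim]; ring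
      have h2 : r^2 = t^2 := by
        rw [h1, hAt, hBt]
        linear_combination (t^2) * (Real.sin_sq_add_cos_sq σ)
      have hrnn : 0 ≤ r := hr ▸ mul_nonneg (norm_nonneg _) (norm_nonneg _)
      exact aux_eq_of_sq_eq hrnn htpos h2
    obtain ⟨kc, ks⟩ := key z₁ z₂ hz1 hz2
    refine ⟨hq, ?_, ?_⟩
    · rw [kc, hmre, ← hr, hrt, hAt]
      field_simp [ne_of_gt htpos]
    · rw [ks, hmim, ← hr, hrt, hBt]
      field_simp [ne_of_gt htpos]
  · rintro ⟨hq, hc, hs⟩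
    have hz1 : z₁ ≠ 0 := fun h => hq (by have := congrArg Complex.im h; rw [him1] at this; simpa using this)
    have hz2 : z₂ ≠ 0 := fun h => hq (by have := congrArg Complex.im h; rw [him2] at this; simpa using this)
    obtain ⟨kc, ks⟩ := key z₁ z₂ hz1 hz2
    obtain ⟨r, hr⟩ : ∃ r : ℝ, r = ‖z₁‖ * ‖z₂‖ := ⟨_, rfl⟩
    have hrpos : 0 < r := hr ▸ mul_pos (norm_pos_iff.mpr hz1) (norm_pos_iff.mpr hz2)
    rw [kc, hmre, ← hr] at hc
    rw [ks, hmim, ← hr] at hs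
    have hcos : Real.cos σ = A / r := hc.symm
    have hsin : Real.sin σ = B / r := hs.symm
    constructor
    · have hpq : p * q ≠ 0 := by
        intro h
        apply hσ
        rw [hsin, hB, h]; simp
      rcases lt_trichotomy (p*q) 0 with h | h | h
      · have : 0 < Real.sin σ := by
          rw [hsin]; apply div_pos _ hrpos; rw [hB]; nlinarith
        rw [Real.sign_of_neg h, Real.sign_of_pos this]
      · exact absurd h hpq
      · have : Real.sin σ < 0 := by
          rw [hsin]; apply div_neg_of_neg_of_pos _ hrpos; rw [hB]; nlinarith
        rw [Real.sign_of_pos h, Real.sign_of_neg this]; norm_num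
    · rw [hcos, hsin, hA, hB]
      field_simp
      ring
end

section
/- If the control point (p,q) lies on the hyperbola sin σ₀·(1 - p² + q²) + 2pq cos σ₀ = 0 parametrized as p = ρ(ξ) cos ξ, q = ρ(ξ) sin ξ with ρ(ξ)² = sin σ₀ / sin(σ₀ - 2ξ), then h₁h₂ = sin 2ξ / sin(2ξ - σ₀), where h₁ = √((1+p)²+q²), h₂ = √((1-p)²+q²). -/
set_option maxHeartbeats 1600000 in
/-- If the control point `(p,q)` lies on the (branch of the) hyperbola
`sin σ₀·(1 - p² + q²) + 2pq·cos σ₀ = 0`, `sign(pq) = -sign(sin σ₀)`,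
parametrized in polar form `ρ(ξ)² = sin σ₀ / sin(σ₀ - 2ξ)`, then
`h₁h₂ = sin 2ξ / sin(2ξ - σ₀)`. -/
theorem hyperbola_h1h2 (σ₀ ρ ξ : ℝ) (hρ : 0 < ρ)
    (hσ : Real.sin σ₀ ≠ 0) (hξ : Real.sin (σ₀ - 2*ξ) ≠ 0)
    (hρ2 : ρ^2 = Real.sin σ₀ / Real.sin (σ₀ - 2*ξ))
    (p q : ℝ) (hp : p = ρ * Real.cos ξ) (hq : q = ρ * Real.sin ξ)
    (hbranch : Real.sign (p * q) = -Real.sign (Real.sin σ₀)) :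
    Real.sqrt ((1 + p)^2 + q^2) * Real.sqrt ((1 - p)^2 + q^2)
      = Real.sin (2*ξ) / Real.sin (2*ξ - σ₀) := by
  obtain ⟨S, hS⟩ : ∃ S, Real.sin σ₀ = S := ⟨_, rfl⟩
  obtain ⟨C, hC⟩ : ∃ C, Real.cos σ₀ = C := ⟨_, rfl⟩
  obtain ⟨s, hs⟩ : ∃ s, Real.sin ξ = s := ⟨_, rfl⟩
  obtain ⟨c, hc⟩ : ∃ c, Real.cos ξ = c := ⟨_, rfl⟩
  have pyth1 : S^2 + C^2 = 1 := by rw [← hS, ← hC]; exact Real.sin_sq_add_cos_sq σ₀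
  have pyth2 : s^2 + c^2 = 1 := by rw [← hs, ← hc]; exact Real.sin_sq_add_cos_sq ξ
  obtain ⟨D, hDdef⟩ : ∃ D, S*(2*c^2-1) - C*(2*s*c) = D := ⟨_, rfl⟩
  have hDval : Real.sin (σ₀ - 2*ξ) = D := by
    rw [Real.sin_sub, Real.cos_two_mul, Real.sin_two_mul, hS, hC, hs, hc, hDdef]
  have hs2 : Real.sin (2*ξ) = 2*s*c := by rw [Real.sin_two_mul, hs, hc]
  have hD2 : Real.sin (2*ξ - σ₀) = -D := by
    rw [show (2*ξ - σ₀) = -(σ₀ - 2*ξ) by ring, Real.sin_neg, hDval]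
  rw [hDval] at hξ hρ2
  rw [hS] at hσ hbranch hρ2
  -- polynomial heart of the identity
  have hE : (D + S)^2 - 4*S*D*c^2 = (2*s*c)^2 := by
    rw [← hDdef]
    linear_combination (4*c^2*s^2) * pyth1 - (4*c^2*S^2) * pyth2
  -- product of the two squared distances
  have hprod : ((1 + p)^2 + q^2) * ((1 - p)^2 + q^2)
      = (1 + ρ^2)^2 - 4*ρ^2*c^2 := by
    subst hp hq
    rw [hs, hc]
    linear_combination (2*(1+ρ^2)*ρ^2 + ρ^4*(s^2 + c^2 - 1)) * pyth2
  have key : ((1 + p)^2 + q^2) * ((1 - p)^2 + q^2)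
      = (Real.sin (2*ξ) / Real.sin (2*ξ - σ₀))^2 := by
    rw [hprod, hρ2, hD2, hs2, div_pow, neg_sq]
    field_simp
    linear_combination hE
  -- sign of the RHS
  have hρ2pos : (0:ℝ) < S / D := by rw [← hρ2]; positivity
  have hpqS : p * q * S < 0 := by
    rcases lt_trichotomy S 0 with hSn | hS0 | hSp
    · rw [Real.sign_of_neg hSn] at hbranch
      have h1 : Real.sign (p*q) = 1 := by rw [hbranch]; norm_num
      have hpq : 0 < p * q := by
        by_contra hcon
        push_neg at hcon
        rcases lt_or_eq_of_le hcon with h | h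
        · rw [Real.sign_of_neg h] at h1; norm_num at h1
        · rw [h, Real.sign_zero] at h1; norm_num at h1
      nlinarith
    · exact absurd hS0 hσ
    · rw [Real.sign_of_pos hSp] at hbranch
      have hpq : p * q < 0 := by
        by_contra hcon
        push_neg at hcon
        rcases lt_or_eq_of_le hcon with h | h
        · rw [Real.sign_of_pos h] at hbranch; norm_num at hbranch
        · rw [← h, Real.sign_zero] at hbranch; norm_num at hbranch
      nlinarith
  have hpq2 : p * q = ρ^2 * (2*s*c) / 2 := by rw [hp, hq, hs, hc]; ring
  have hsin2S : (2*s*c) * S < 0 := by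
    rw [hpq2] at hpqS
    by_contra hcon
    push_neg at hcon
    have h2 : 0 ≤ ρ^2 * (2*s*c) / 2 * S := by
      have := mul_nonneg (by positivity : (0:ℝ) ≤ ρ^2/2) hcon
      linarith [this]
    linarith
  have hrhs : 0 ≤ Real.sin (2*ξ) / Real.sin (2*ξ - σ₀) := by
    rw [hD2, hs2]
    rcases lt_trichotomy S 0 with hSn | hS0 | hSp
    · have hDn : D < 0 := by
        rcases lt_trichotomy D 0 with h | h | h
        · exact h
        · exact absurd h hξ
        · exfalso; have := div_neg_of_neg_of_pos hSn h; linarith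
      have h2 : 0 < 2*s*c := by nlinarith
      exact le_of_lt (div_pos h2 (by linarith))
    · exact absurd hS0 hσ
    · have hDp : 0 < D := by
        rcases lt_trichotomy D 0 with h | h | h
        · exfalso; have := div_neg_of_pos_of_neg hSp h; linarith
        · exact absurd h hξ
        · exact h
      have h2 : 2*s*c < 0 := by nlinarith
      apply le_of_lt
      exact div_pos_of_neg_of_neg h2 (by linarith)
  calc Real.sqrt ((1 + p)^2 + q^2) * Real.sqrt ((1 - p)^2 + q^2)
      = Real.sqrt (((1 + p)^2 + q^2) * ((1 - p)^2 + q^2)) := by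
        rw [Real.sqrt_mul (by positivity)]
    _ = Real.sqrt ((Real.sin (2*ξ) / Real.sin (2*ξ - σ₀))^2) := by rw [key]
    _ = Real.sin (2*ξ) / Real.sin (2*ξ - σ₀) := Real.sqrt_sq hrhs
end

section
/- Under the constraint p = ρ(ξ) cos ξ, q = ρ(ξ) sin ξ, ρ(ξ)² = sin σ₀/sin(σ₀ - 2ξ), the invariant Q(p,q) = 1/2 + (p²+q²-1)/(2h₁h₂) - q²(2p²+2q²+1)/(h₁³h₂³) equals Q(ξ; σ₀) = f₂(σ₀) - sin³σ₀ · f₁(ξ), where f₂(σ) = cos³σ - (3/2)cos σ + 1/2 and f₁(ξ) = (tan⁴ξ + 6tan²ξ - 3)/(8 tan ξ). -/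
set_option maxHeartbeats 1000000

/-- On the hyperbola branch `ρ(ξ)² = sin σ₀ / sin(σ₀ - 2ξ)`,
`sign(pq) = -sign(sin σ₀)`, the invariant
`Q(p,q) = 1/2 + (p²+q²-1)/(2h₁h₂) - q²(2p²+2q²+1)/(h₁³h₂³)` equals
`f₂(σ₀) - sin³σ₀·f₁(ξ)` with `f₂(σ) = cos³σ - (3/2)cos σ + 1/2` and
`f₁(ξ) = (tan⁴ξ + 6tan²ξ - 3)/(8 tan ξ)`. -/
theorem hyperbola_Q_of_xi (σ₀ ρ ξ : ℝ) (hρ : 0 < ρ)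
    (hσ : Real.sin σ₀ ≠ 0) (hξ : Real.sin (σ₀ - 2*ξ) ≠ 0)
    (hcos : Real.cos ξ ≠ 0) (hsin : Real.sin ξ ≠ 0)
    (hρ2 : ρ^2 = Real.sin σ₀ / Real.sin (σ₀ - 2*ξ))
    (p q : ℝ) (hp : p = ρ * Real.cos ξ) (hq : q = ρ * Real.sin ξ)
    (hbranch : Real.sign (p * q) = -Real.sign (Real.sin σ₀)) :
    let h₁ : ℝ := Real.sqrt ((1 + p)^2 + q^2)
    let h₂ : ℝ := Real.sqrt ((1 - p)^2 + q^2)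
    1/2 + (p^2 + q^2 - 1)/(2*h₁*h₂) - q^2*(2*p^2 + 2*q^2 + 1)/(h₁^3*h₂^3)
      = (Real.cos σ₀^3 - 3/2*Real.cos σ₀ + 1/2)
        - Real.sin σ₀^3 * ((Real.tan ξ^4 + 6*Real.tan ξ^2 - 3)/(8*Real.tan ξ)) := by
  intro h₁ h₂
  set x := Real.sin ξ with hx
  set y := Real.cos ξ with hy
  set s := Real.sin σ₀ with hs
  set c := Real.cos σ₀ with hc
  set S := Real.sin (σ₀ - 2*ξ) with hS
  have g1 : x^2 + y^2 = 1 := Real.sin_sq_add_cos_sq ξ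
  have g2 : s^2 + c^2 = 1 := Real.sin_sq_add_cos_sq σ₀
  have g3 : S = s*(y^2 - x^2) - 2*c*x*y := by
    rw [hS, hx, hy, hs, hc, Real.sin_sub, Real.cos_two_mul, Real.sin_two_mul]
    linear_combination Real.sin σ₀ * Real.sin_sq_add_cos_sq ξ
  -- squares of p and q
  have hp2 : p^2 = s*y^2/S := by rw [hp, mul_pow, hρ2]; ring
  have hq2 : q^2 = s*x^2/S := by rw [hq, mul_pow, hρ2]; ring
  -- sign facts
  have hsS : 0 < s * S := by
    have h1 : 0 < s / S := by rw [← hρ2]; positivity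
    have h2 : s * S = (s / S) * S^2 := by field_simp
    rw [h2]; positivity
  have hxys : x * y * s < 0 := by
    have hpq : p * q = ρ^2 * (x*y) := by rw [hp, hq]; ring
    rcases lt_trichotomy s 0 with h | h | h
    · rw [Real.sign_of_neg h] at hbranch
      norm_num at hbranch
      have hpq_pos : 0 < p * q := by
        rcases lt_trichotomy (p*q) 0 with h' | h' | h'
        · rw [Real.sign_of_neg h'] at hbranch; norm_num at hbranch
        · rw [h', Real.sign_zero] at hbranch; norm_num at hbranch
        · exact h'
      rw [hpq] at hpq_pos
      nlinarith [pow_pos hρ 2, mul_pos hpq_pos (neg_pos.mpr h)]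
    · exact absurd h hσ
    · rw [Real.sign_of_pos h] at hbranch
      have hpq_neg : p * q < 0 := by
        rcases lt_trichotomy (p*q) 0 with h' | h' | h'
        · exact h'
        · rw [h', Real.sign_zero] at hbranch; norm_num at hbranch
        · rw [Real.sign_of_pos h'] at hbranch; norm_num at hbranch
      rw [hpq] at hpq_neg
      nlinarith [pow_pos hρ 2, mul_neg_of_neg_of_pos hpq_neg h]
  have hxyS : x * y * S < 0 := by nlinarith [sq_nonneg s, mul_pos hsS hsS]
  have hdivneg : 2 * x * y / S < 0 := by
    have h2 : 2*x*y/S * S^2 = 2*(x*y*S) := by field_simp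
    nlinarith [sq_nonneg S, pow_pos (abs_pos.mpr hξ) 2]
  -- the product of square roots
  have hA : (0:ℝ) ≤ (1+p)^2 + q^2 := by positivity
  have hAB : ((1 + p)^2 + q^2) * ((1 - p)^2 + q^2) = (2*x*y/S)^2 := by
    have e : ((1 + p)^2 + q^2) * ((1 - p)^2 + q^2) = (1 + p^2 + q^2)^2 - 4*p^2 := by ring
    rw [e, hp2, hq2]
    field_simp
    linear_combination ((1)*S + (1)*x^2*s + (-1)*y^2*s + (-2)*x*y*c) * g3 + ((4)*x^2*y^2) * g2
  have hH : h₁ * h₂ = -(2*x*y/S) := by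
    show Real.sqrt ((1 + p)^2 + q^2) * Real.sqrt ((1 - p)^2 + q^2) = -(2*x*y/S)
    rw [← Real.sqrt_mul hA, hAB, Real.sqrt_sq_eq_abs, abs_of_neg hdivneg]
  have hH3 : h₁^3 * h₂^3 = (-(2*x*y/S))^3 := by rw [← mul_pow, hH]
  have hH2 : 2 * h₁ * h₂ = 2 * (-(2*x*y/S)) := by rw [mul_assoc, hH]
  rw [hH2, hH3, hp2, hq2, Real.tan_eq_sin_div_cos, ← hx, ← hy]
  field_simp
  linear_combination ((16)*y^2 + (8)*x^2*s^2 + (24)*y^2*s^2 + (8)*s*S + (-16)*x*y*s*c) * g3 + ((-64)*x*y^3*c + (32)*x^2*y^2*s) * g2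
end

section
/- For Q₁ ∈ ℝ, set m = (1 + Q₁²)^{1/3}, n = √(m² + m + 1), r₁ = √(m - 1), r₂ = √(2n - m - 2). Then the real roots of the quartic θ⁴ + 6θ² + 8Q₁θ - 3 = 0 are exactly θ = -r₁·sign(Q₁) + r₂ and θ = -r₁·sign(Q₁) - r₂ (when Q₁ ≠ 0), and their product equals r₁² - r₂² = 2m + 1 - 2n < 0, so the two real roots have opposite signs. -/
/-- For `Q₁ ≠ 0`, with `m = (1 + Q₁²)^{1/3}`, `n = √(m² + m + 1)`,
`r₁ = √(m - 1)`, `r₂ = √(2n - m - 2)`, the real roots of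
`θ⁴ + 6θ² + 8Q₁θ - 3 = 0` are exactly `-r₁·sign Q₁ ± r₂`, and their product
`r₁² - r₂² = 2m + 1 - 2n` is negative, so they have opposite signs. -/
theorem quartic_real_roots (Q₁ : ℝ) (hQ : Q₁ ≠ 0) :
    let m : ℝ := (1 + Q₁^2) ^ ((1 : ℝ)/3)
    let n : ℝ := Real.sqrt (m^2 + m + 1)
    let r₁ : ℝ := Real.sqrt (m - 1)
    let r₂ : ℝ := Real.sqrt (2*n - m - 2)
    (∀ θ : ℝ, θ^4 + 6*θ^2 + 8*Q₁*θ - 3 = 0 ↔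
        θ = -r₁ * Real.sign Q₁ + r₂ ∨ θ = -r₁ * Real.sign Q₁ - r₂) ∧
    (-r₁ * Real.sign Q₁ + r₂) * (-r₁ * Real.sign Q₁ - r₂) = r₁^2 - r₂^2 ∧
    r₁^2 - r₂^2 = 2*m + 1 - 2*n ∧
    2*m + 1 - 2*n < 0 := by
  intro m n r₁ r₂
  have hQ2 : (0:ℝ) < 1 + Q₁^2 := by positivity
  have hm3 : m^3 = 1 + Q₁^2 := by
    show ((1 + Q₁^2) ^ ((1:ℝ)/3))^3 = 1 + Q₁^2
    rw [← Real.rpow_natCast ((1 + Q₁^2) ^ ((1:ℝ)/3)) 3, ← Real.rpow_mul hQ2.le]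
    norm_num
  have hmpos : (0:ℝ) < m := Real.rpow_pos_of_pos hQ2 _
  have hm1 : 1 ≤ m := by nlinarith [sq_nonneg Q₁, sq_nonneg (m-1), sq_nonneg (m+1)]
  have hn0 : 0 ≤ n := Real.sqrt_nonneg _
  have hn2 : n^2 = m^2 + m + 1 := Real.sq_sqrt (by nlinarith)
  have hr10 : 0 ≤ r₁ := Real.sqrt_nonneg _
  have hr1 : r₁^2 = m - 1 := Real.sq_sqrt (by linarith)
  have h2n : 2*n - m - 2 ≥ 0 := by nlinarith [sq_nonneg (2*n - m - 2)]
  have hr20 : 0 ≤ r₂ := Real.sqrt_nonneg _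
  have hr2 : r₂^2 = 2*n - m - 2 := Real.sq_sqrt h2n
  set s : ℝ := Real.sign Q₁ with hs
  have hs2 : s^2 = 1 := by
    rcases hQ.lt_or_gt with h | h
    · rw [hs, Real.sign_of_neg h]; norm_num
    · rw [hs, Real.sign_of_pos h]; norm_num
  set a : ℝ := r₁ * s with hadef
  have ha2 : a^2 = m - 1 := by rw [hadef, mul_pow, hr1, hs2]; ring
  have han : a * n = Q₁ := by
    have habs : r₁ * n = |Q₁| := by
      have h1 : (r₁ * n)^2 = Q₁^2 := by rw [mul_pow, hr1, hn2]; nlinarith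
      rw [← Real.sqrt_sq (mul_nonneg hr10 hn0), h1, Real.sqrt_sq_eq_abs]
    rcases hQ.lt_or_gt with h | h
    · rw [hadef, hs, Real.sign_of_neg h]
      rw [abs_of_neg h] at habs; linarith [habs]
    · rw [hadef, hs, Real.sign_of_pos h]
      rw [abs_of_pos h] at habs; linarith [habs]
  have key : ∀ θ : ℝ, θ^4 + 6*θ^2 + 8*Q₁*θ - 3 =
      (θ - (-a + r₂)) * (θ - (-a - r₂)) * ((θ - a)^2 + (m + 2 + 2*n)) := by
    intro θ
    linear_combination (2*θ^2 - a^2 - 3*m - 3) * ha2 + (-8*θ) * han +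
      (θ^2 - 2*a*θ + a^2 + m + 2 + 2*n) * hr2 + 4 * hn2
  have hpos : ∀ θ : ℝ, 0 < (θ - a)^2 + (m + 2 + 2*n) := by
    intro θ; nlinarith [sq_nonneg (θ - a)]
  refine ⟨?_, ?_, ?_, ?_⟩
  · intro θ
    rw [key θ]
    constructor
    · intro h
      rcases mul_eq_zero.mp h with h | h
      · rcases mul_eq_zero.mp h with h | h
        · left; show θ = -r₁ * s + r₂; linarith [sub_eq_zero.mp h]
        · right; show θ = -r₁ * s - r₂; linarith [sub_eq_zero.mp h]
      · exact absurd h (ne_of_gt (hpos θ))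
    · rintro (h | h) <;> rw [h, hadef] <;> ring
  · show (-r₁*s + r₂) * (-r₁*s - r₂) = r₁^2 - r₂^2
    nlinarith [hs2]
  · rw [hr1, hr2]; ring
  · nlinarith [sq_nonneg (2*m + 1 - 2*n)]
end

section
/- Let W(z) = (z + z₀)/(1 + z₀z) with z₀ ≠ ±1, and let γ(s) parametrize a curve with γ(0) = -1, γ'(0) = e^{iα} (unit speed at s=0), and signed curvature a at s=0 (i.e. γ''(0) = i·a·e^{iα}). Write (1+z₀)/(1-z₀) = r₀e^{iλ₀} with r₀ > 0. Then the image curve w(s) = W(γ(s)) satisfies w(0) = -1, w'(0) = r₀e^{i(α+λ₀)}, and its signed curvature at s = 0 equals (a + sin α)/r₀ - sin(α + λ₀). -/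
open Complex Filter Topology


/-- Image of a curve through `(-1, 0)` under the Möbius transformation
`W(z) = (z + z₀)/(1 + z₀z)`, `z₀ ≠ ±1`: if `γ(0) = -1`, `γ'(0) = e^{iα}`,
`γ''(0) = i·a·e^{iα}` and `(1 + z₀)/(1 - z₀) = r₀e^{ilam₀}` with `r₀ > 0`, then
`w = W ∘ γ` satisfies `w(0) = -1`, `w'(0) = r₀e^{i(α+lam₀)}`, and the signed
curvature of `w` at `0` equals `(a + sin α)/r₀ - sin(α + lam₀)`. -/
theorem moebius_image_curvature (z₀ : ℂ) (hz1 : z₀ ≠ 1) (hz2 : z₀ ≠ -1)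
    (γ : ℝ → ℂ) (hγ : ContDiff ℝ 2 γ) (hγ0 : γ 0 = -1)
    (α a r₀ lam₀ : ℝ) (hr : 0 < r₀)
    (hd1 : deriv γ 0 = Complex.exp ((α : ℂ) * Complex.I))
    (hd2 : deriv (deriv γ) 0 = Complex.I * (a : ℂ) * Complex.exp ((α : ℂ) * Complex.I))
    (hrl : (1 + z₀) / (1 - z₀) = (r₀ : ℂ) * Complex.exp ((lam₀ : ℂ) * Complex.I)) :
    let w : ℝ → ℂ := fun s => (γ s + z₀) / (1 + z₀ * γ s)
    w 0 = -1 ∧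
    deriv w 0 = (r₀ : ℂ) * Complex.exp (((α + lam₀ : ℝ) : ℂ) * Complex.I) ∧
    ((starRingEnd ℂ) (deriv w 0) * deriv (deriv w) 0).im / ‖deriv w 0‖ ^ 3
      = (a + Real.sin α) / r₀ - Real.sin (α + lam₀) := by
  intro w
  have h0 : (1 : ℂ) - z₀ ≠ 0 := sub_ne_zero.mpr (Ne.symm hz1)
  have hγd : Differentiable ℝ γ := hγ.differentiable (by norm_num)
  have hγ1 : ContDiff ℝ 1 (deriv γ) := by
    have h11 : ContDiff ℝ (1 + 1) γ := by
      have : ((1 : WithTop ℕ∞) + 1) = 2 := by norm_num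
      rw [this]; exact hγ
    exact (contDiff_succ_iff_deriv.mp h11).2.2
  have hγ'd : Differentiable ℝ (deriv γ) := hγ1.differentiable one_ne_zero
  have hD0 : (1 : ℂ) + z₀ * γ 0 ≠ 0 := by
    have h : (1 : ℂ) + z₀ * (-1) = 1 - z₀ := by ring
    rw [hγ0, h]; exact h0
  have hDcont : Continuous fun s => (1 : ℂ) + z₀ * γ s :=
    continuous_const.add (continuous_const.mul hγd.continuous)
  have hev : ∀ᶠ s in 𝓝 (0 : ℝ), (1 : ℂ) + z₀ * γ s ≠ 0 :=
    hDcont.continuousAt.eventually_ne hD0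
  set g : ℝ → ℂ := fun s => deriv γ s * (1 - z₀ ^ 2) / ((1 + z₀ * γ s) * (1 + z₀ * γ s)) with hg
  have hwd : ∀ s : ℝ, (1 : ℂ) + z₀ * γ s ≠ 0 → HasDerivAt w (g s) s := by
    intro s hs
    have h1 : HasDerivAt (fun t => γ t + z₀) (deriv γ s) s := (hγd s).hasDerivAt.add_const z₀
    have h2 : HasDerivAt (fun t => (1 : ℂ) + z₀ * γ t) (z₀ * deriv γ s) s :=
      ((hγd s).hasDerivAt.const_mul z₀).const_add 1
    have this : HasDerivAt w _ s := h1.div h2 hs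
    convert this using 1
    show deriv γ s * (1 - z₀ ^ 2) / ((1 + z₀ * γ s) * (1 + z₀ * γ s)) = _
    rw [div_eq_div_iff (mul_ne_zero hs hs) (pow_ne_zero 2 hs)]
    ring
  have hevg : deriv w =ᶠ[𝓝 (0 : ℝ)] g := hev.mono fun s hs => (hwd s hs).deriv
  have hdw0 : deriv w 0 = g 0 := hevg.self_of_nhds
  have hddw : deriv (deriv w) 0 = deriv g 0 := hevg.deriv_eq
  -- derivative of g at 0
  have h1 : HasDerivAt (fun t => deriv γ t * (1 - z₀ ^ 2))
      (deriv (deriv γ) 0 * (1 - z₀ ^ 2)) 0 := (hγ'd 0).hasDerivAt.mul_const _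
  have hDd : HasDerivAt (fun t => (1 : ℂ) + z₀ * γ t) (z₀ * deriv γ 0) 0 :=
    ((hγd 0).hasDerivAt.const_mul z₀).const_add 1
  have h2 : HasDerivAt (fun t => ((1 : ℂ) + z₀ * γ t) * (1 + z₀ * γ t)) _ 0 := hDd.mul hDd
  have hgd := h1.div h2 (mul_ne_zero hD0 hD0)
  have hdg0 : deriv g 0 = _ := hgd.deriv
  -- abbreviations
  set c : ℂ := (r₀ : ℂ) * Complex.exp ((lam₀ : ℂ) * Complex.I) with hc
  set E : ℂ := Complex.exp ((α : ℂ) * Complex.I) with hE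
  have hcz : 1 + z₀ = c * (1 - z₀) := by rw [← hrl]; field_simp
  have h3 : (2 : ℂ) * z₀ = (c - 1) * (1 - z₀) := by linear_combination hcz
  -- value of w' 0
  have hA : deriv w 0 = c * E := by
    rw [hdw0, hg]
    simp only [hγ0, hd1]
    have h4 : (1 : ℂ) + z₀ * (-1) = 1 - z₀ := by ring
    rw [h4, div_eq_iff (mul_ne_zero h0 h0)]
    have h5 : (1 : ℂ) - z₀ ^ 2 = (1 + z₀) * (1 - z₀) := by ring
    rw [h5, hcz]
    ring
  have hexpadd : Complex.exp (((α + lam₀ : ℝ) : ℂ) * Complex.I) =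
      E * Complex.exp ((lam₀ : ℂ) * Complex.I) := by
    rw [hE, ← Complex.exp_add]; push_cast; ring_nf
  -- value of w'' 0
  have hB : deriv (deriv w) 0 = c * (Complex.I * a * E - (c - 1) * E ^ 2) := by
    rw [hddw, hdg0]
    simp only [hγ0, hd1, hd2]
    have h4 : (1 : ℂ) + z₀ * (-1) = 1 - z₀ := by ring
    rw [h4, div_eq_iff (pow_ne_zero 2 (mul_ne_zero h0 h0))]
    have h5 : (1 : ℂ) - z₀ ^ 2 = (1 + z₀) * (1 - z₀) := by ring
    rw [h5, hcz]
    push_cast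
    linear_combination (-(c * E ^ 2 * (1 - z₀) ^ 3)) * h3
  -- conjugation facts
  have hE1 : ‖E‖ = 1 := Complex.norm_exp_ofReal_mul_I α
  have hc1 : ‖c‖ = r₀ := by
    rw [hc, norm_mul, Complex.norm_exp_ofReal_mul_I, Complex.norm_of_nonneg hr.le, mul_one]
  have hEE : (starRingEnd ℂ) E * E = 1 := by
    rw [mul_comm, Complex.mul_conj, Complex.normSq_eq_norm_sq, hE1]; norm_num
  have hcc : (starRingEnd ℂ) c * c = (r₀ : ℂ) ^ 2 := by
    rw [mul_comm, Complex.mul_conj, Complex.normSq_eq_norm_sq, hc1]; push_cast; ring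
  refine ⟨?_, ?_, ?_⟩
  · show (γ 0 + z₀) / (1 + z₀ * γ 0) = -1
    rw [div_eq_iff hD0, hγ0]
    ring
  · rw [hA, hexpadd]; ring
  · have hce : c * E = (r₀ : ℂ) * (E * Complex.exp ((lam₀ : ℂ) * Complex.I)) := by
      rw [hc]; ring
    have hK : (starRingEnd ℂ) (deriv w 0) * deriv (deriv w) 0 =
        (r₀ : ℂ) ^ 2 * (Complex.I * a + E - (r₀ : ℂ) * Complex.exp (((α + lam₀ : ℝ) : ℂ) * Complex.I)) := by
      rw [hA, hB, map_mul, hexpadd]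
      linear_combination ((starRingEnd ℂ) E * E) * (Complex.I * a - (c - 1) * E) * hcc +
        ((r₀:ℂ)^2 * (Complex.I * a - (c-1) * E)) * hEE - (r₀:ℂ)^2 * hce
    have habs : ‖deriv w 0‖ = r₀ := by
      rw [hA, norm_mul, hE1, hc1, mul_one]
    have him : ((r₀ : ℂ) ^ 2 * (Complex.I * a + E - (r₀ : ℂ) * Complex.exp (((α + lam₀ : ℝ) : ℂ) * Complex.I))).im
        = r₀ ^ 2 * (a + Real.sin α - r₀ * Real.sin (α + lam₀)) := by
      rw [show ((r₀:ℂ))^2 = ((r₀^2 : ℝ) : ℂ) by push_cast; ring]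
      simp only [hE, Complex.mul_im, Complex.mul_re, Complex.exp_ofReal_mul_I_im,
        Complex.exp_ofReal_mul_I_re, Complex.add_im, Complex.sub_im, Complex.add_re,
        Complex.sub_re, Complex.I_im, Complex.I_re, Complex.ofReal_im, Complex.ofReal_re]
      ring
    rw [hK, habs, him]
    field_simp
end
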